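/- arXiv:1904.13054 — 2 statements merged into one kernel-verified Lean document; each statement's English description precedes it below -/
import Mathlib

section
/- Let A ∈ ℂ^{m×m} and B ∈ ℂ^{r×r}. The matrix I_r ⊗ A + Bᵀ ⊗ I_m is nonsingular if and only if spec(A) ∩ spec(−B) = ∅, i.e., A and −B have no common eigenvalue. -/
/-!
In the column-stacking basis `vec`, the Kronecker sum `1 ⊗ A + Bᵀ ⊗ 1` is the matrix of the
Sylvester operator `X ↦ A X + X B`. A common eigenvalue `μ` of `A` and `-B`, with `A v = μ v` and
`wᵀ B = -μ wᵀ`, gives the nonzero kernel element `v wᵀ`. Conversely, `A X = X (-B)` implies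
`p(A) X = X p(-B)` for every polynomial `p`; for the characteristic polynomial `p` of `A`,
Cayley–Hamilton kills the left side, while `p(-B)` is invertible by the spectral mapping theorem
because no root of `p` is an eigenvalue of `-B`. Hence `X = 0`.
-/

open Matrix Kronecker
open scoped Polynomial

section Sylvester

variable {R : Type*} [CommSemiring R] {m n : Type*} [Fintype m] [Fintype n]

def sylvesterOperator (A : Matrix m m R) (B : Matrix n n R) : Matrix m n R →ₗ[R] Matrix m n R where
  toFun X := A * X + X * B
  map_add' X Y := by simp only [Matrix.mul_add, Matrix.add_mul]; abel
  map_smul' c X := by simp only [Matrix.mul_smul, Matrix.smul_mul, smul_add, RingHom.id_apply]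

theorem sylvesterOperator_apply (A : Matrix m m R) (B : Matrix n n R) (X : Matrix m n R) :
    sylvesterOperator A B X = A * X + X * B := rfl

variable [DecidableEq m] [DecidableEq n]

theorem kronecker_sum_mulVec_vec (A : Matrix m m R) (B : Matrix n n R) (X : Matrix m n R) :
    (1 ⊗ₖ A + Bᵀ ⊗ₖ 1) *ᵥ vec X = vec (sylvesterOperator A B X) := by
  rw [add_mulVec, ← vec_mul_eq_mulVec, kronecker_mulVec_vec, transpose_transpose, Matrix.one_mul]
  rfl

theorem pow_mul_eq_mul_pow_of_mul_eq {A : Matrix m m R} {B : Matrix n n R} {X : Matrix m n R}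
    (h : A * X = X * B) (k : ℕ) : A ^ k * X = X * B ^ k := by
  induction k with
  | zero => simp
  | succ k ih =>
    rw [pow_succ, pow_succ, Matrix.mul_assoc, h, ← Matrix.mul_assoc, ih, Matrix.mul_assoc]

theorem aeval_mul_eq_mul_aeval_of_mul_eq {A : Matrix m m R} {B : Matrix n n R} {X : Matrix m n R}
    (h : A * X = X * B) (p : R[X]) :
    Polynomial.aeval A p * X = X * Polynomial.aeval B p := by
  simp only [Polynomial.aeval_eq_sum_range, Matrix.sum_mul, Matrix.mul_sum, Matrix.smul_mul,
    Matrix.mul_smul, pow_mul_eq_mul_pow_of_mul_eq h]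

end Sylvester

namespace Polynomial

theorem isUnit_aeval_of_forall_mem_spectrum {K A : Type*} [Field K] [IsAlgClosed K]
    [Ring A] [Algebra K A] {p : K[X]} (hp : p ≠ 0) {a : A}
    (h : ∀ μ ∈ spectrum K a, ¬ p.IsRoot μ) : IsUnit (aeval a p) := by
  rcases le_or_gt p.degree 0 with hdeg | hdeg
  · rw [eq_C_of_degree_le_zero hdeg, aeval_C]
    exact (Ne.isUnit fun h0 => hp (by rw [eq_C_of_degree_le_zero hdeg, h0, C_0])).map _
  · rw [← spectrum.zero_notMem_iff K, spectrum.map_polynomial_aeval_of_degree_pos a p hdeg]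
    rintro ⟨μ, hμ, hroot⟩
    exact h μ hμ hroot

end Polynomial

namespace Matrix

theorem vecMulVec_ne_zero' {α m n : Type*} [MulZeroClass α] [NoZeroDivisors α] {v : m → α}
    {w : n → α} (hv : v ≠ 0) (hw : w ≠ 0) : vecMulVec v w ≠ 0 := by
  obtain ⟨i, hi⟩ := Function.ne_iff.mp hv
  obtain ⟨j, hj⟩ := Function.ne_iff.mp hw
  exact fun h0 => mul_ne_zero hi hj <| by
    simpa only [vecMulVec_apply, zero_apply] using congrFun₂ h0 i j

variable {K : Type*} [Field K] {n : Type*} [Fintype n] [DecidableEq n] {A : Matrix n n K} {μ : K}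

theorem exists_mulVec_eq_smul_of_mem_spectrum (h : μ ∈ spectrum K A) :
    ∃ v ≠ 0, A *ᵥ v = μ • v := by
  rw [mem_spectrum_iff_isRoot_charpoly, Polynomial.IsRoot, eval_charpoly,
    ← exists_mulVec_eq_zero_iff] at h
  obtain ⟨v, hv, hker⟩ := h
  rw [sub_mulVec, sub_eq_zero] at hker
  exact ⟨v, hv, by simpa only [scalar_apply, diagonal_const_mulVec] using hker.symm⟩

theorem exists_vecMul_eq_smul_of_mem_spectrum (h : μ ∈ spectrum K A) :
    ∃ v ≠ 0, v ᵥ* A = μ • v := by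
  rw [mem_spectrum_iff_isRoot_charpoly, Polynomial.IsRoot, eval_charpoly,
    ← exists_vecMul_eq_zero_iff] at h
  obtain ⟨v, hv, hker⟩ := h
  rw [vecMul_sub, sub_eq_zero] at hker
  exact ⟨v, hv, by
    simpa only [scalar_apply, vecMul_diagonal_const, op_smul_eq_smul] using hker.symm⟩

end Matrix

section Spectra

variable {K : Type*} [Field K] {m n : Type*} [Fintype m] [Fintype n] [DecidableEq m]
  [DecidableEq n] {A : Matrix m m K} {B : Matrix n n K}

theorem isUnit_kronecker_sum_iff_injective_sylvesterOperator :
    IsUnit (1 ⊗ₖ A + Bᵀ ⊗ₖ 1) ↔ Function.Injective (sylvesterOperator A B) := by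
  have hvec : (1 ⊗ₖ A + Bᵀ ⊗ₖ 1).mulVec ∘ vec = vec ∘ sylvesterOperator A B :=
    funext (kronecker_sum_mulVec_vec A B)
  rw [← mulVec_injective_iff_isUnit, ← Function.Injective.of_comp_iff' _ vec_bijective, hvec,
    Function.Injective.of_comp_iff vec_bijective.injective]

theorem disjoint_spectrum_neg_of_injective_sylvesterOperator
    (h : Function.Injective (sylvesterOperator A B)) :
    Disjoint (spectrum K A) (spectrum K (-B)) := by
  rw [Set.disjoint_left]
  intro μ hA hB
  obtain ⟨v, hv, hAv⟩ := exists_mulVec_eq_smul_of_mem_spectrum hA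
  obtain ⟨w, hw, hBw⟩ := exists_vecMul_eq_smul_of_mem_spectrum hB
  rw [vecMul_neg, neg_eq_iff_eq_neg] at hBw
  have hker : sylvesterOperator A B (vecMulVec v w) = 0 := by
    rw [sylvesterOperator_apply, mul_vecMulVec, vecMulVec_mul, hAv, hBw]
    simp
  exact vecMulVec_ne_zero' hv hw (h (hker.trans (map_zero _).symm))

theorem injective_sylvesterOperator_of_disjoint [IsAlgClosed K]
    (h : Disjoint (spectrum K A) (spectrum K (-B))) :
    Function.Injective (sylvesterOperator A B) := by
  rw [injective_iff_map_eq_zero]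
  intro X hX
  have hint : A * X = X * -B := by
    rw [sylvesterOperator_apply, add_eq_zero_iff_eq_neg] at hX
    rw [hX, Matrix.mul_neg]
  have hunit : IsUnit (Polynomial.aeval (-B) A.charpoly) :=
    Polynomial.isUnit_aeval_of_forall_mem_spectrum A.charpoly_monic.ne_zero fun μ hμ hroot =>
      h.notMem_of_mem_right hμ (mem_spectrum_iff_isRoot_charpoly.mpr hroot)
  obtain ⟨u, hu⟩ := hunit.exists_right_inv
  calc X = X * Polynomial.aeval (-B) A.charpoly * u := by
        rw [Matrix.mul_assoc, hu, Matrix.mul_one]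
    _ = 0 := by
        rw [← aeval_mul_eq_mul_aeval_of_mul_eq hint, aeval_self_charpoly, Matrix.zero_mul,
          Matrix.zero_mul]

theorem injective_sylvesterOperator_iff_disjoint [IsAlgClosed K] :
    Function.Injective (sylvesterOperator A B) ↔ Disjoint (spectrum K A) (spectrum K (-B)) :=
  ⟨disjoint_spectrum_neg_of_injective_sylvesterOperator, injective_sylvesterOperator_of_disjoint⟩

end Spectra

theorem kronecker_sum_nonsingular_iff_spectra_disjoint (m r : ℕ)
    (A : Matrix (Fin m) (Fin m) ℂ) (B : Matrix (Fin r) (Fin r) ℂ) :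
    IsUnit ((1 : Matrix (Fin r) (Fin r) ℂ) ⊗ₖ A
        + Bᵀ ⊗ₖ (1 : Matrix (Fin m) (Fin m) ℂ)) ↔
      spectrum ℂ A ∩ spectrum ℂ (-B) = ∅ := by
  rw [isUnit_kronecker_sum_iff_injective_sylvesterOperator,
    injective_sylvesterOperator_iff_disjoint, Set.disjoint_iff_inter_eq_empty]
end

section
/- Let A_i ∈ ℝ^{m_i×m}, B_i ∈ ℝ^{r×r_i}, C_i ∈ ℝ^{m×r_i} for i = 1,…,n, with Σ m_i = m, Σ r_i = r, and A = col{A_1,…,A_n}, B = [B_1,…,B_n], C = [C_1,…,C_n]. Suppose X_1,…,X_n ∈ ℝ^{m×r}, Y_i ∈ ℝ^{m_i×r}, Z_i ∈ ℝ^{m×r_i} satisfy: X_i = X_j for all i,j; A_i X_i = Y_i for all i; X_i B_i − C_i + Z_i = 0 for all i; and Σ_{i=1}^n [Y_i]_R = Σ_{i=1}^n [Z_i]_C (i.e., Y = Z as m×r matrices, where [Y_i]_R places Y_i in the i-th row block and [Z_i]_C places Z_i in the i-th column block, with zeros elsewhere). Then the common value X = X_i is an exact solution of the Sylvester equation AX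 + XB = C. -/
open Matrix

variable {n : ℕ} {msz rsz : Fin n → ℕ}

/-- The `i`-th row block of a matrix whose rows are partitioned by `msz`. -/
def rowBlock (A : Matrix ((i : Fin n) × Fin (msz i)) ((i : Fin n) × Fin (msz i)) ℝ)
    (i : Fin n) : Matrix (Fin (msz i)) ((i : Fin n) × Fin (msz i)) ℝ :=
  Matrix.of fun k q => A ⟨i, k⟩ q

/-- The `i`-th column block of a matrix whose columns are partitioned by `rsz`. -/
def colBlock {ρ : Type*} (B : Matrix ρ ((i : Fin n) × Fin (rsz i)) ℝ)
    (i : Fin n) : Matrix ρ (Fin (rsz i)) ℝ :=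
  Matrix.of fun p l => B p ⟨i, l⟩

/-- `[Y_i]_R`: place `Y_i` in the `i`-th row block, zeros elsewhere. -/
def embedRow {κ : Type*} (i : Fin n) (Y : Matrix (Fin (msz i)) κ ℝ) :
    Matrix ((i : Fin n) × Fin (msz i)) κ ℝ :=
  Matrix.of fun p q => if h : p.1 = i then Y (h ▸ p.2) q else 0

/-- `[Z_i]_C`: place `Z_i` in the `i`-th column block, zeros elsewhere. -/
def embedCol {ρ : Type*} (i : Fin n) (Z : Matrix ρ (Fin (rsz i)) ℝ) :
    Matrix ρ ((i : Fin n) × Fin (rsz i)) ℝ :=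
  Matrix.of fun p q => if h : q.1 = i then Z p (h ▸ q.2) else 0

/-! Each block equation is local, but summing the embedded blocks recovers the full products:
`∑ [A_i X]_R = A X` and `∑ [C_i - X B_i]_C = C - X B`. The coupling constraint `Y = Z` therefore
says `A X = C - X B` for the common value `X`. -/

theorem sum_embedRow_apply {κ : Type*} (Y : (i : Fin n) → Matrix (Fin (msz i)) κ ℝ)
    (p : (i : Fin n) × Fin (msz i)) (q : κ) :
    (∑ i, embedRow i (Y i)) p q = Y p.1 p.2 q := by
  rw [Matrix.sum_apply, Finset.sum_eq_single p.1]
  · simp [embedRow]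
  · intro j _ hj
    simp [embedRow, Ne.symm hj]
  · simp

theorem sum_embedCol_apply {ρ : Type*} (Z : (i : Fin n) → Matrix ρ (Fin (rsz i)) ℝ)
    (p : ρ) (q : (i : Fin n) × Fin (rsz i)) :
    (∑ i, embedCol i (Z i)) p q = Z q.1 p q.2 := by
  rw [Matrix.sum_apply, Finset.sum_eq_single q.1]
  · simp [embedCol]
  · intro j _ hj
    simp [embedCol, Ne.symm hj]
  · simp

theorem sum_embedRow_rowBlock_mul {κ : Type*} [Fintype κ]
    (A : Matrix ((i : Fin n) × Fin (msz i)) ((i : Fin n) × Fin (msz i)) ℝ)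
    (M : Matrix ((i : Fin n) × Fin (msz i)) κ ℝ) :
    ∑ i, embedRow i (rowBlock A i * M) = A * M := by
  ext p q
  rw [sum_embedRow_apply]
  rfl

theorem sum_embedCol_colBlock {ρ : Type*} (M : Matrix ρ ((i : Fin n) × Fin (rsz i)) ℝ) :
    ∑ i, embedCol i (colBlock M i) = M := by
  ext p q
  rw [sum_embedCol_apply]
  rfl

theorem mul_colBlock {ρ κ : Type*} [Fintype κ] (M : Matrix ρ κ ℝ)
    (B : Matrix κ ((i : Fin n) × Fin (rsz i)) ℝ) (i : Fin n) :
    M * colBlock B i = colBlock (M * B) i :=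
  rfl

theorem colBlock_sub {ρ : Type*} (M N : Matrix ρ ((i : Fin n) × Fin (rsz i)) ℝ) (i : Fin n) :
    colBlock (M - N) i = colBlock M i - colBlock N i :=
  rfl

theorem distributed_feasible_implies_sylvester
    (A : Matrix ((i : Fin n) × Fin (msz i)) ((i : Fin n) × Fin (msz i)) ℝ)
    (B : Matrix ((i : Fin n) × Fin (rsz i)) ((i : Fin n) × Fin (rsz i)) ℝ)
    (C : Matrix ((i : Fin n) × Fin (msz i)) ((i : Fin n) × Fin (rsz i)) ℝ)
    (X : Fin n → Matrix ((i : Fin n) × Fin (msz i)) ((i : Fin n) × Fin (rsz i)) ℝ)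
    (Y : (i : Fin n) → Matrix (Fin (msz i)) ((i : Fin n) × Fin (rsz i)) ℝ)
    (Z : (i : Fin n) → Matrix ((i : Fin n) × Fin (msz i)) (Fin (rsz i)) ℝ)
    (hconsensus : ∀ i j, X i = X j)
    (hY : ∀ i, rowBlock A i * X i = Y i)
    (hZ : ∀ i, X i * colBlock B i - colBlock C i + Z i = 0)
    (hYZ : ∑ i, embedRow i (Y i) = ∑ i, embedCol i (Z i)) :
    ∀ i, A * X i + X i * B = C := by
  intro i
  have hYi : ∀ j, Y j = rowBlock A j * X i := fun j => by
    rw [← hY j, hconsensus j i]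
  have hZi : ∀ j, Z j = colBlock (C - X i * B) j := fun j => by
    rw [colBlock_sub, ← mul_colBlock, ← hconsensus j i, eq_sub_iff_add_eq, ← sub_eq_zero,
      ← hZ j]
    abel
  have hAX : A * X i = C - X i * B := by
    rw [← sum_embedRow_rowBlock_mul, ← sum_embedCol_colBlock (C - X i * B)]
    simpa only [hYi, hZi] using hYZ
  rw [hAX, sub_add_cancel]
end
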